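/- Summing satisfied anti-subtour inequalities yields a contradiction with a large violation: let H = (V, E) be a hypergraph with x : E → ℝ, let S ⊊ V, and let V \ S be partitioned into disjoint nonempty sets V_1, …, V_k such that no edge e with x_e ≠ 0 meets two distinct V_i's. If x(V) = |V| - 1 and, for every i, x(V_i) + x(V_i : S) ≥ |V_i|, then x(S) ≤ |S| - 1. -/

import Mathlib

open Finset

/-- `x(A) = Σ_{e ∈ E} max(|e ∩ A| - 1, 0) · x_e`. -/
def xWeight {V : Type*} [DecidableEq V] (E : Finset (Finset V)) (x : Finset V → ℝ)
    (A : Finset V) : ℝ :=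
  ∑ e ∈ E, (((e ∩ A).card - 1 : ℕ) : ℝ) * x e

/-- `x(A:B) = Σ_{e ∈ E, e ∩ A ≠ ∅ ∧ e ∩ B ≠ ∅} x_e`. -/
def xCut {V : Type*} [DecidableEq V] (E : Finset (Finset V)) (x : Finset V → ℝ)
    (A B : Finset V) : ℝ :=
  ∑ e ∈ E.filter (fun e => (e ∩ A).Nonempty ∧ (e ∩ B).Nonempty), x e

/-
Splitting `V = (V \ S) ∪ S` and summing edge by edge gives
`x(V) = x(S) + x(V \ S) + x(V \ S : S)`. Since an edge of nonzero weight meets at most one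
`V_i`, both `x(V \ S)` and `x(V \ S : S)` decompose as sums over the parts, so
`x(V) = x(S) + Σᵢ (x(V_i) + x(V_i : S)) ≥ x(S) + Σᵢ |V_i| ≥ x(S) + |V| - |S|`.
-/

namespace Finset

theorem card_union_sub_one_of_disjoint {α : Type*} [DecidableEq α] {s t : Finset α}
    (h : Disjoint s t) :
    #(s ∪ t) - 1 = (#s - 1) + (#t - 1) + if s.Nonempty ∧ t.Nonempty then 1 else 0 := by
  rw [card_union_of_disjoint h]
  by_cases hs : s.Nonempty <;> by_cases ht : t.Nonempty <;>
    simp only [hs, ht, and_self, and_true, and_false, if_true,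
      if_false] <;> simp only [← card_pos, not_lt, nonpos_iff_eq_zero] at hs ht <;> omega

end Finset

section Hypergraph

variable {V : Type*} [DecidableEq V] (E : Finset (Finset V)) (x : Finset V → ℝ)

theorem xCut_eq_sum (A B : Finset V) :
    xCut E x A B = ∑ e ∈ E, (if (e ∩ A).Nonempty ∧ (e ∩ B).Nonempty then 1 else 0) * x e := by
  simp only [xCut, sum_filter, ite_mul, one_mul, zero_mul]

theorem xWeight_union_of_disjoint {A B : Finset V} (h : Disjoint A B) :
    xWeight E x (A ∪ B) = xWeight E x A + xWeight E x B + xCut E x A B := by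
  simp only [xWeight, xCut_eq_sum, ← sum_add_distrib, ← add_mul]
  refine sum_congr rfl fun e _ => ?_
  rw [inter_union_distrib_left,
    card_union_sub_one_of_disjoint (h.mono inter_subset_right inter_subset_right)]
  push_cast
  rfl

variable {ι : Type*} [Fintype ι] (P : ι → Finset V)

theorem sum_inter_eq_inter_sup {e : Finset V} (g : Finset V → ℝ) (hg : g ∅ = 0)
    (he : ∀ i j, i ≠ j → ¬((e ∩ P i).Nonempty ∧ (e ∩ P j).Nonempty)) :
    ∑ i, g (e ∩ P i) = g (e ∩ univ.sup P) := by
  by_cases hmeet : ∃ i₀, (e ∩ P i₀).Nonempty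
  · obtain ⟨i₀, hi₀⟩ := hmeet
    have hmiss : ∀ j, j ≠ i₀ → e ∩ P j = ∅ := fun j hj =>
      not_nonempty_iff_eq_empty.mp fun hj' => he j i₀ hj ⟨hj', hi₀⟩
    have hsup : e ∩ univ.sup P = e ∩ P i₀ := by
      ext v
      simp only [mem_inter, mem_sup, mem_univ, true_and]
      refine ⟨fun ⟨hve, j, hvj⟩ => ⟨hve, ?_⟩, fun ⟨hve, hvi₀⟩ => ⟨hve, i₀, hvi₀⟩⟩
      by_cases hj : j = i₀
      · exact hj ▸ hvj
      · simpa [hmiss j hj] using mem_inter.mpr ⟨hve, hvj⟩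
    rw [hsup, sum_eq_single i₀ (fun j _ hj => by rw [hmiss j hj, hg]) (by simp)]
  · push Not at hmeet
    have hsup : e ∩ univ.sup P = ∅ := by
      rw [← bot_eq_empty, inf_eq_inter.symm, sup_inf_distrib_left]
      simp only [inf_eq_inter, hmeet]
      exact sup_bot _
    simp [hmeet, hsup, hg]

abbrev NonzeroEdgesMeetAtMostOnePart : Prop :=
  ∀ e ∈ E, x e ≠ 0 → ∀ i j, i ≠ j → ¬((e ∩ P i).Nonempty ∧ (e ∩ P j).Nonempty)

variable {E x}

theorem sum_edges_inter_sup (hcomp : NonzeroEdgesMeetAtMostOnePart E x P)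
    (g : Finset V → Finset V → ℝ) (hg : ∀ e, g e ∅ = 0) :
    ∑ e ∈ E, g e (e ∩ univ.sup P) * x e = ∑ i, ∑ e ∈ E, g e (e ∩ P i) * x e := by
  rw [sum_comm]
  refine sum_congr rfl fun e he => ?_
  by_cases hx : x e = 0
  · simp [hx]
  · rw [← sum_mul, sum_inter_eq_inter_sup P (g e) (hg e) (hcomp e he hx)]

theorem xWeight_sup (hcomp : NonzeroEdgesMeetAtMostOnePart E x P) :
    xWeight E x (univ.sup P) = ∑ i, xWeight E x (P i) :=
  sum_edges_inter_sup P hcomp (fun _ s => ((#s - 1 : ℕ) : ℝ)) (by simp)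

theorem xCut_sup (hcomp : NonzeroEdgesMeetAtMostOnePart E x P) (B : Finset V) :
    xCut E x (univ.sup P) B = ∑ i, xCut E x (P i) B := by
  simp only [xCut_eq_sum]
  exact sum_edges_inter_sup P hcomp (fun e s => if s.Nonempty ∧ (e ∩ B).Nonempty then 1 else 0)
    (by simp)

end Hypergraph

theorem stmt10_general {V : Type*} [DecidableEq V] (Vs : Finset V) (E : Finset (Finset V))
    (x : Finset V → ℝ)
    (S : Finset V) (hS : S ⊂ Vs)
    (k : ℕ) (Vpart : Fin k → Finset V)
    (hcover : Finset.univ.sup Vpart = Vs \ S)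
    (hcomp : ∀ e ∈ E, x e ≠ 0 → ∀ i j, i ≠ j →
      ¬((e ∩ Vpart i).Nonempty ∧ (e ∩ Vpart j).Nonempty))
    (hdeg : xWeight E x Vs = (Vs.card : ℝ) - 1)
    (hanti : ∀ i, ((Vpart i).card : ℝ) ≤ xWeight E x (Vpart i) + xCut E x (Vpart i) S) :
    xWeight E x S ≤ (S.card : ℝ) - 1 := by
  have hVs : Vs = univ.sup Vpart ∪ S := by rw [hcover, sdiff_union_of_subset hS.subset]
  have hsplit : xWeight E x Vs
      = xWeight E x S + ∑ i, (xWeight E x (Vpart i) + xCut E x (Vpart i) S) := by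
    rw [hVs, xWeight_union_of_disjoint E x (hcover ▸ sdiff_disjoint), xWeight_sup Vpart hcomp,
      xCut_sup Vpart hcomp, sum_add_distrib]
    ring
  have hcard : (#Vs : ℝ) ≤ #S + ∑ i, (#(Vpart i) : ℝ) := by
    have : #Vs ≤ #S + ∑ i, #(Vpart i) := by
      calc #Vs ≤ #(univ.sup Vpart) + #S := hVs ▸ card_union_le _ _
        _ ≤ #S + ∑ i, #(Vpart i) := by
          rw [add_comm, sup_eq_biUnion]
          exact Nat.add_le_add_left card_biUnion_le _
    exact_mod_cast this
  have := sum_le_sum fun i (_ : i ∈ univ) => hanti i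
  linarith

/-- Summing satisfied anti-subtour inequalities: if `V \ S` is partitioned into
disjoint nonempty sets `V_1, …, V_k` such that no edge of nonzero weight meets two
distinct `V_i`, `x(V) = |V| - 1`, and `x(V_i) + x(V_i : S) ≥ |V_i|` for every `i`,
then `x(S) ≤ |S| - 1`. -/
theorem stmt10 {V : Type*} [DecidableEq V] (Vs : Finset V) (E : Finset (Finset V))
    (x : Finset V → ℝ) (hE : ∀ e ∈ E, e ⊆ Vs)
    (S : Finset V) (hS : S ⊂ Vs)
    (k : ℕ) (Vpart : Fin k → Finset V)
    (hne : ∀ i, (Vpart i).Nonempty)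
    (hdisj : ∀ i j, i ≠ j → Disjoint (Vpart i) (Vpart j))
    (hcover : Finset.univ.sup Vpart = Vs \ S)
    (hcomp : ∀ e ∈ E, x e ≠ 0 → ∀ i j, i ≠ j →
      ¬((e ∩ Vpart i).Nonempty ∧ (e ∩ Vpart j).Nonempty))
    (hdeg : xWeight E x Vs = (Vs.card : ℝ) - 1)
    (hanti : ∀ i, ((Vpart i).card : ℝ) ≤ xWeight E x (Vpart i) + xCut E x (Vpart i) S) :
    xWeight E x S ≤ (S.card : ℝ) - 1 :=
  stmt10_general Vs E x S hS k Vpart hcover hcomp hdeg hanti
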